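/- Let m ≥ 1 be an integer, n = 4m+3. Define A = YX₂ − (3/m)Z(X₁ + (2m/3)X₂) and P = X₁(R₂ − (1−H²)/n) − X₂(R₁ − (1−H²)/n) − 2X₂(X₁ + (2m/3)X₂)(X₁ − X₂). Then at any point where A = 0 and X₁ + (2m/3)X₂ ≠ 0, the directional derivative of A along the vector field V of the Einstein system equals Y·P/(X₁ + (2m/3)X₂). -/

import Mathlib

/-! The vector field is V =
(X₁(Q − H) + r₁, X₂(Q − H) + r₂, Y(Q − X₁), Z(Q + X₁ − 2X₂)) where Q = H(G + (1 − H²)/n) and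
rᵢ = Rᵢ − (1 − H²)/n. The terms carrying Q and H rescale both summands YX₂ and
(3/m)Z(X₁ + (2m/3)X₂) of A by the same factor, so they cancel on {A = 0}; substituting
(3/m)Z = YX₂/(X₁ + (2m/3)X₂) in what remains gives YP/(X₁ + (2m/3)X₂). -/

/-- The vector field V of the cohomogeneity one Einstein system,
on points p = (X₁, X₂, Y, Z) with n = 4m+3. -/
noncomputable def einsteinV (m : ℕ) (p : Fin 4 → ℝ) : Fin 4 → ℝ :=
  ![p 0 * (3*p 0 + 4*m*p 1) * ((3*(p 0)^2 + 4*m*(p 1)^2)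
      + (1 - (3*p 0 + 4*m*p 1)^2)/(4*m+3) - 1)
      + (2*(p 2)^2 + 4*m*(p 3)^2) - (1 - (3*p 0 + 4*m*p 1)^2)/(4*m+3),
    p 1 * (3*p 0 + 4*m*p 1) * ((3*(p 0)^2 + 4*m*(p 1)^2)
      + (1 - (3*p 0 + 4*m*p 1)^2)/(4*m+3) - 1)
      + ((4*m+8)*(p 2)*(p 3) - 6*(p 3)^2) - (1 - (3*p 0 + 4*m*p 1)^2)/(4*m+3),
    p 2 * ((3*p 0 + 4*m*p 1) * ((3*(p 0)^2 + 4*m*(p 1)^2)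
      + (1 - (3*p 0 + 4*m*p 1)^2)/(4*m+3)) - p 0),
    p 3 * ((3*p 0 + 4*m*p 1) * ((3*(p 0)^2 + 4*m*(p 1)^2)
      + (1 - (3*p 0 + 4*m*p 1)^2)/(4*m+3)) + p 0 - 2*p 1)]

/-- The function A = Y X₂ − (3/m) Z (X₁ + (2m/3) X₂). -/
noncomputable def einsteinA (m : ℕ) (p : Fin 4 → ℝ) : ℝ :=
  p 2 * p 1 - (3/(m:ℝ)) * p 3 * (p 0 + (2*(m:ℝ)/3)*p 1)

/-- The polynomial P. -/
noncomputable def einsteinP (m : ℕ) (p : Fin 4 → ℝ) : ℝ :=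
  p 0 * (((4*(m:ℝ)+8)*(p 2)*(p 3) - 6*(p 3)^2) - (1 - (3*p 0 + 4*(m:ℝ)*p 1)^2)/(4*(m:ℝ)+3))
  - p 1 * ((2*(p 2)^2 + 4*(m:ℝ)*(p 3)^2) - (1 - (3*p 0 + 4*(m:ℝ)*p 1)^2)/(4*(m:ℝ)+3))
  - 2*p 1*(p 0 + (2*(m:ℝ)/3)*p 1)*(p 0 - p 1)

theorem fderiv_einsteinA_apply (m : ℕ) (x v : Fin 4 → ℝ) :
    fderiv ℝ (einsteinA m) x v
      = v 2 * x 1 + x 2 * v 1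
        - 3 / m * (v 3 * (x 0 + 2 * m / 3 * x 1) + x 3 * (v 0 + 2 * m / 3 * v 1)) := by
  have hp (i : Fin 4) := hasFDerivAt_apply (𝕜 := ℝ) i x
  have hA : HasFDerivAt (einsteinA m) _ x :=
    ((hp 2).mul (hp 1)).sub
      (((hp 3).const_mul (3 / (m : ℝ))).mul ((hp 0).add ((hp 1).const_mul (2 * (m : ℝ) / 3))))
  rw [hA.fderiv]
  simp only [sub_apply, add_apply, smul_apply, ContinuousLinearMap.proj_apply, smul_eq_mul]
  ring

theorem fderiv_einsteinA_of_shape {m : ℕ} (hm : (m : ℝ) ≠ 0) {x v : Fin 4 → ℝ}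
    (q h r₁ r₂ : ℝ)
    (hv : v = ![x 0 * (q - h) + r₁, x 1 * (q - h) + r₂, x 2 * (q - x 0),
      x 3 * (q + x 0 - 2 * x 1)])
    (hA : einsteinA m x = 0) (hne : x 0 + 2 * m / 3 * x 1 ≠ 0) :
    fderiv ℝ (einsteinA m) x v
      = x 2 * (x 0 * r₂ - x 1 * r₁ - 2 * x 1 * (x 0 + 2 * m / 3 * x 1) * (x 0 - x 1))
        / (x 0 + 2 * m / 3 * x 1) := by
  rw [fderiv_einsteinA_apply, hv, eq_div_iff hne]
  simp only [Matrix.cons_val_zero, Matrix.cons_val_one, Matrix.cons_val_two,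
    Matrix.cons_val_three, Matrix.head_cons, Matrix.tail_cons]
  unfold einsteinA at hA
  linear_combination (norm := (field_simp; ring))
    ((x 0 + 2 * m / 3 * x 1) * (2 * q + x 0 - 2 * x 1 - h) + r₁ + 2 * m / 3 * r₂) * hA

/-- On {A = 0}, the directional derivative of A along V equals Y·P/(X₁ + (2m/3)X₂). -/
theorem deriv_of_A_along_V (m : ℕ) (hm : 1 ≤ m) (x : Fin 4 → ℝ)
    (hA : einsteinA m x = 0) (hne : x 0 + (2*(m:ℝ)/3)*x 1 ≠ 0) :
    fderiv ℝ (einsteinA m) x (einsteinV m x)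
      = x 2 * einsteinP m x / (x 0 + (2*(m:ℝ)/3)*x 1) := by
  set H := 3 * x 0 + 4 * m * x 1
  set G := 3 * x 0 ^ 2 + 4 * m * x 1 ^ 2
  set s := (1 - H ^ 2) / (4 * m + 3)
  set R₁ := 2 * x 2 ^ 2 + 4 * m * x 3 ^ 2
  set R₂ := (4 * m + 8) * x 2 * x 3 - 6 * x 3 ^ 2
  have hV : einsteinV m x = ![x 0 * (H * (G + s) - H) + (R₁ - s),
      x 1 * (H * (G + s) - H) + (R₂ - s), x 2 * (H * (G + s) - x 0),
      x 3 * (H * (G + s) + x 0 - 2 * x 1)] := by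
    ext i
    fin_cases i <;>
      simp only [einsteinV, H, G, s, R₁, R₂, Fin.zero_eta, Fin.mk_one, Fin.reduceFinMk,
        Matrix.cons_val, Matrix.cons_val_zero, Matrix.cons_val_one] <;>
      ring
  rw [fderiv_einsteinA_of_shape (by positivity) _ _ _ _ hV hA hne]
  unfold einsteinP
  ring
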